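/- arXiv:1701.05725 — 4 statements merged into one kernel-verified Lean document; each statement's English description precedes it below -/
import Mathlib

section
/- For 2×2 matrices A and B, det(A ⊗ I₂ ± I₂ ⊗ B) = (det A - det B)² + det A · (tr B)² + det B · (tr A)² ± (det A + det B) · tr A · tr B, where ⊗ denotes the Kronecker product and I₂ is the 2×2 identity matrix. -/
/-!
Viewing `A ⊗ I + I ⊗ B` as a 2 × 2 block matrix with commuting blocks `A i j • 1 + δ i j • B`
(the image of `charmatrix (-A)` under `X ↦ B`), Silvester's theorem gives
`det (A ⊗ I + I ⊗ B) = det (χ_{-A}(B)) = det (B² + tr A • B + det A • 1)`.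
Cayley–Hamilton for `B` linearises this to `det ((tr A + tr B) • B + (det A - det B) • 1)`,
a 2 × 2 determinant that expands to the stated formula. The minus sign is the case `-B`.
-/

open Matrix Kronecker Polynomial

namespace Matrix

variable {R : Type*} [CommRing R]

theorem det_kronecker_one_add_one_kronecker {m n : Type*} [Fintype m] [Fintype n]
    [DecidableEq m] [DecidableEq n] (A : Matrix m m R) (B : Matrix n n R) :
    (A ⊗ₖ (1 : Matrix n n R) + (1 : Matrix m m R) ⊗ₖ B).det = (aeval B (-A).charpoly).det := by
  refine Eq.symm <| (det_det (charmatrix (-A)) (aeval B).toRingHom).trans (congrArg det ?_)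
  ext ⟨i, k⟩ ⟨j, l⟩
  by_cases hij : i = j <;> by_cases hkl : k = l <;>
    simp [kroneckerMap_apply, algebraMap_matrix_apply, hij, hkl, add_comm]

-- `Matrix.charpoly_fin_two` additionally assumes `Nontrivial R`.
theorem charpoly_fin_two' (M : Matrix (Fin 2) (Fin 2) R) :
    M.charpoly = X ^ 2 - C M.trace * X + C M.det := by
  rw [charpoly, det_fin_two, trace_fin_two, det_fin_two]
  simp only [charmatrix_apply_eq, charmatrix_apply_ne, ne_eq, zero_ne_one, one_ne_zero,
    not_false_eq_true, map_add, map_sub, map_mul]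
  ring

theorem aeval_neg_charpoly_fin_two (A B : Matrix (Fin 2) (Fin 2) R) :
    aeval B (-A).charpoly
      = (A.trace + B.trace) • B + (A.det - B.det) • (1 : Matrix (Fin 2) (Fin 2) R) := by
  have cayley_hamilton := B.aeval_self_charpoly
  rw [charpoly_fin_two'] at cayley_hamilton
  rw [charpoly_fin_two', trace_neg, det_neg, Fintype.card_fin, neg_one_sq, one_mul]
  simp only [map_add, map_sub, map_mul, map_pow, aeval_X, aeval_C,
    Algebra.algebraMap_eq_smul_one, smul_mul, one_mul] at cayley_hamilton ⊢
  linear_combination (norm := module) cayley_hamilton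

theorem det_smul_add_smul_one_fin_two (B : Matrix (Fin 2) (Fin 2) R) (s t : R) :
    (s • B + t • (1 : Matrix (Fin 2) (Fin 2) R)).det
      = s ^ 2 * B.det + s * t * B.trace + t ^ 2 := by
  simp only [det_fin_two, trace_fin_two, add_apply, smul_apply, smul_eq_mul, one_apply_eq,
    one_apply_ne, ne_eq, zero_ne_one, one_ne_zero, not_false_eq_true]
  ring

theorem det_kronecker_one_add_one_kronecker_fin_two (A B : Matrix (Fin 2) (Fin 2) R) :
    (A ⊗ₖ (1 : Matrix (Fin 2) (Fin 2) R) + (1 : Matrix (Fin 2) (Fin 2) R) ⊗ₖ B).det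
      = (A.det - B.det) ^ 2 + A.det * B.trace ^ 2 + B.det * A.trace ^ 2
        + (A.det + B.det) * A.trace * B.trace := by
  rw [det_kronecker_one_add_one_kronecker, aeval_neg_charpoly_fin_two,
    det_smul_add_smul_one_fin_two]
  ring

end Matrix

/-- For 2×2 matrices `A`, `B` over a commutative ring,
`det(A ⊗ I₂ ± I₂ ⊗ B) = (det A - det B)² + det A (tr B)² + det B (tr A)²
  ± (det A + det B) tr A tr B`. -/
theorem stmt5 {R : Type*} [CommRing R] (A B : Matrix (Fin 2) (Fin 2) R) :
    (A ⊗ₖ (1 : Matrix (Fin 2) (Fin 2) R) + (1 : Matrix (Fin 2) (Fin 2) R) ⊗ₖ B).det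
      = (A.det - B.det) ^ 2 + A.det * (B.trace) ^ 2 + B.det * (A.trace) ^ 2
        + (A.det + B.det) * A.trace * B.trace ∧
    (A ⊗ₖ (1 : Matrix (Fin 2) (Fin 2) R) - (1 : Matrix (Fin 2) (Fin 2) R) ⊗ₖ B).det
      = (A.det - B.det) ^ 2 + A.det * (B.trace) ^ 2 + B.det * (A.trace) ^ 2
        - (A.det + B.det) * A.trace * B.trace := by
  have sub_eq_add_neg_kronecker :
      A ⊗ₖ (1 : Matrix (Fin 2) (Fin 2) R) - (1 : Matrix (Fin 2) (Fin 2) R) ⊗ₖ B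
        = A ⊗ₖ 1 + 1 ⊗ₖ (-B) := by
    ext
    simp [kroneckerMap_apply, sub_eq_add_neg]
  refine ⟨det_kronecker_one_add_one_kronecker_fin_two A B, ?_⟩
  rw [sub_eq_add_neg_kronecker, det_kronecker_one_add_one_kronecker_fin_two, trace_neg, det_neg,
    Fintype.card_fin, neg_one_sq, one_mul]
  ring
end

section
/- Suppose |⟨k, ω⟩ + a| ≥ γ/|k|^τ and |ω' - ω| < ε, |a' - a| < ε. Then for γ₊ < γ and all k with 0 < |k| < K := c((γ - γ₊)/ε)^{1/(τ+1)} (with c small enough, e.g. c ≤ 1/2), one has |⟨k, ω'⟩ + a'| ≥ γ₊/|k|^τ. -/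
open Finset

/-!
Moving from `(ω, a)` to `(ω', a')` changes `⟨k, ω⟩ + a` by at most `|k| ε + ε ≤ 2 |k| ε`,
and `|k| < c ((γ - γ₊) / ε)^{1/(τ+1)}` with `c ≤ 1/2` gives `2 |k|^{τ+1} ε ≤ γ - γ₊`.
So the perturbation eats at most `(γ - γ₊) / |k|^τ` of the lower bound `γ / |k|^τ`.
-/

lemma abs_sum_mul_add_sub_le {ι : Type*} [Fintype ι] (k ω ω' : ι → ℝ) {a a' ε : ℝ}
    (hω : ∀ i, |ω' i - ω i| ≤ ε) (ha : |a' - a| ≤ ε) :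
    |(∑ i, k i * ω' i + a') - (∑ i, k i * ω i + a)| ≤ (∑ i, |k i|) * ε + ε := by
  calc |(∑ i, k i * ω' i + a') - (∑ i, k i * ω i + a)|
      = |∑ i, k i * (ω' i - ω i) + (a' - a)| := by
        simp only [mul_sub, sum_sub_distrib]; ring_nf
    _ ≤ ∑ i, |k i * (ω' i - ω i)| + |a' - a| :=
        (abs_add_le _ _).trans (add_le_add_left (abs_sum_le_sum_abs _ _) _)
    _ ≤ ∑ i, |k i| * ε + ε := by
        gcongr with i
        rw [abs_mul]
        exact mul_le_mul_of_nonneg_left (hω i) (abs_nonneg _)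
    _ = (∑ i, |k i|) * ε + ε := by rw [sum_mul]

lemma one_le_sum_abs_intCast {ι : Type*} [Fintype ι] (k : ι → ℤ)
    (h : 0 < ∑ i, |(k i : ℝ)|) : 1 ≤ ∑ i, |(k i : ℝ)| := by
  have hcast : ∑ i, |(k i : ℝ)| = ((∑ i, |k i| : ℤ) : ℝ) := by push_cast; rfl
  rw [hcast] at h ⊢
  exact_mod_cast (Int.cast_pos.mp h : (0 : ℤ) < _)

lemma rpow_le_half_of_lt_rpow_inv_div_two {x X p : ℝ} (hx : 0 ≤ x) (hX : 0 ≤ X) (hp : 1 ≤ p)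
    (h : x < X ^ (1 / p) / 2) : x ^ p ≤ X / 2 := by
  have hp0 : 0 < p := zero_lt_one.trans_le hp
  calc x ^ p ≤ (X ^ (1 / p) / 2) ^ p := Real.rpow_le_rpow hx h.le hp0.le
    _ = X / 2 ^ p := by
        rw [Real.div_rpow (by positivity) zero_le_two, one_div, Real.rpow_inv_rpow hX hp0.ne']
    _ ≤ X / 2 := by
        gcongr
        simpa using Real.rpow_le_rpow_of_exponent_le one_le_two hp

lemma add_mul_le_div_rpow_of_lt_mul_rpow {K ε δ τ c : ℝ} (hK : 1 ≤ K) (hε : 0 < ε)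
    (hδ : 0 < δ) (hτ : 0 ≤ τ) (hc : c ≤ 1 / 2) (h : K < c * (δ / ε) ^ (1 / (τ + 1))) :
    K * ε + ε ≤ δ / K ^ τ := by
  have hK0 : 0 < K := zero_lt_one.trans_le hK
  have h' : K < (δ / ε) ^ (1 / (τ + 1)) / 2 := by
    have : 0 ≤ (δ / ε) ^ (1 / (τ + 1)) := by positivity
    nlinarith
  have hpow : K ^ τ * K ≤ δ / ε / 2 := by
    rw [← Real.rpow_add_one hK0.ne']
    exact rpow_le_half_of_lt_rpow_inv_div_two hK0.le (by positivity) (by linarith) h'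
  have hKτ : 0 < K ^ τ := Real.rpow_pos_of_pos hK0 τ
  rw [le_div_iff₀ hKτ]
  calc (K * ε + ε) * K ^ τ ≤ 2 * ε * (K ^ τ * K) := by
        nlinarith [mul_nonneg (mul_nonneg hε.le hKτ.le) (sub_nonneg.mpr hK)]
    _ ≤ 2 * ε * (δ / ε / 2) := by gcongr
    _ = δ := by field_simp

theorem stmt13_general (b : ℕ) (ω ω' : Fin b → ℝ) (k : Fin b → ℤ) (a a' : ℝ)
    (γ γplus ε τ c : ℝ) (hγγ : γplus < γ) (hτ : 0 < τ)
    (hc2 : c ≤ 1 / 2)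
    (knorm : ℝ) (hknorm : knorm = ∑ i, |(k i : ℝ)|)
    (hk0 : 0 < knorm)
    (hsd : |(∑ i, (k i : ℝ) * ω i) + a| ≥ γ / knorm ^ τ)
    (hω : ∀ i, |ω' i - ω i| < ε) (ha : |a' - a| < ε)
    (hK : knorm < c * ((γ - γplus) / ε) ^ (1 / (τ + 1))) :
    |(∑ i, (k i : ℝ) * ω' i) + a'| ≥ γplus / knorm ^ τ := by
  have hε : 0 < ε := (abs_nonneg _).trans_lt ha
  have hk1 : 1 ≤ knorm := hknorm ▸ one_le_sum_abs_intCast k (hknorm ▸ hk0)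
  have hperturb := abs_sum_mul_add_sub_le (fun i => (k i : ℝ)) ω ω' (fun i => (hω i).le) ha.le
  rw [← hknorm] at hperturb
  have hsmall := add_mul_le_div_rpow_of_lt_mul_rpow hk1 hε (sub_pos.mpr hγγ) hτ.le hc2 hK
  calc γplus / knorm ^ τ = γ / knorm ^ τ - (γ - γplus) / knorm ^ τ := by ring
    _ ≤ |∑ i, (k i : ℝ) * ω i + a|
        - |(∑ i, (k i : ℝ) * ω' i + a') - (∑ i, (k i : ℝ) * ω i + a)| :=
      sub_le_sub hsd (hperturb.trans hsmall)
    _ ≤ |∑ i, (k i : ℝ) * ω' i + a'| :=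
      sub_le_comm.mp ((abs_sub_abs_le_abs_sub _ _).trans_eq (abs_sub_comm _ _))

/-- Persistence of small-divisor conditions: if `|⟨k,ω⟩ + a| ≥ γ/|k|^τ`,
`|ω' - ω| < ε` (sup-norm), `|a' - a| < ε`, `γplus < γ`, and
`0 < |k| < K = c((γ-γplus)/ε)^{1/(τ+1)}` with `0 < c ≤ 1/2`, then
`|⟨k,ω'⟩ + a'| ≥ γplus/|k|^τ`. -/
theorem stmt13 (b : ℕ) (ω ω' : Fin b → ℝ) (k : Fin b → ℤ) (a a' : ℝ)
    (γ γplus ε τ c : ℝ) (hγ : 0 < γplus) (hγγ : γplus < γ) (hε : 0 < ε) (hτ : 0 < τ)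
    (hc : 0 < c) (hc2 : c ≤ 1 / 2)
    (knorm : ℝ) (hknorm : knorm = ∑ i, |(k i : ℝ)|)
    (hk0 : 0 < knorm)
    (hsd : |(∑ i, (k i : ℝ) * ω i) + a| ≥ γ / knorm ^ τ)
    (hω : ∀ i, |ω' i - ω i| < ε) (ha : |a' - a| < ε)
    (hK : knorm < c * ((γ - γplus) / ε) ^ (1 / (τ + 1))) :
    |(∑ i, (k i : ℝ) * ω' i) + a'| ≥ γplus / knorm ^ τ :=
  stmt13_general b ω ω' k a a' γ γplus ε τ c hγγ hτ hc2 knorm hknorm hk0 hsd hω ha hK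
end

section
/- Let c, d, f, g ∈ ℤ² with y-coordinates given by y = 2x^{5^b} for distinct positive x-coordinates, and suppose d has strictly the largest x-coordinate, with x_d much larger than the x-coordinates of c, f, g (specifically x_d ≥ x⁵ · P for x the max of the others and P > (sums of products involved)). Then the system ⟨n - g, g - f⟩ = 0, ⟨n - c, c - d⟩ = 0 has no solution n ∈ ℤ², because solving the linear system forces n₂ - c₂ = [(g₁-c₁)(g₁-f₁)(c₁-d₁) + (g₂-c₂)(c₁-d₁)(g₂-f₂)] / [(c₁-d₁)(g₂-f₂) - (c₂-d₂)(g₁-f₁)], a ratio which is not an integer. -/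
private lemma cs_int (a1 a2 b1 b2 : ℤ) :
    (a1 * b1 + a2 * b2) ^ 2 ≤ (a1 ^ 2 + a2 ^ 2) * (b1 ^ 2 + b2 ^ 2) := by
  nlinarith [sq_nonneg (a1 * b2 - a2 * b1)]

set_option maxHeartbeats 4000000

/-- Case I-i-(1) of the appendix: for points `c, d, f, g` on the curve `y = 2x^{5^b}`
with pairwise distinct positive `x`-coordinates and `d` having the strictly largest,
much larger, `x`-coordinate (at least `X⁵·P` with `X` the maximum of the other
`x`-coordinates and `P` exceeding the products of pairwise squared distances among
`c, f, g`), the system `⟨n - g, g - f⟩ = 0`, `⟨n - c, c - d⟩ = 0` has no solution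
`n ∈ ℤ²`. -/
theorem stmt16 (b : ℕ) (hb : 2 ≤ b) (c d f g : ℤ × ℤ)
    (hc : c.2 = 2 * c.1 ^ (5 ^ b)) (hd : d.2 = 2 * d.1 ^ (5 ^ b))
    (hf : f.2 = 2 * f.1 ^ (5 ^ b)) (hg : g.2 = 2 * g.1 ^ (5 ^ b))
    (hcpos : 0 < c.1) (hdpos : 0 < d.1) (hfpos : 0 < f.1) (hgpos : 0 < g.1)
    (hcf : c.1 ≠ f.1) (hcg : c.1 ≠ g.1) (hfg : f.1 ≠ g.1)
    (hdc : c.1 < d.1) (hdf : f.1 < d.1) (hdg : g.1 < d.1)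
    (hbig : (max c.1 (max f.1 g.1)) ^ 5 *
        (((c.1 - g.1) ^ 2 + (c.2 - g.2) ^ 2) * ((c.1 - f.1) ^ 2 + (c.2 - f.2) ^ 2)
          * ((g.1 - f.1) ^ 2 + (g.2 - f.2) ^ 2) + 1) ≤ d.1) :
    ¬ ∃ n : ℤ × ℤ,
      (n.1 - g.1) * (g.1 - f.1) + (n.2 - g.2) * (g.2 - f.2) = 0 ∧
      (n.1 - c.1) * (c.1 - d.1) + (n.2 - c.2) * (c.2 - d.2) = 0 := by
  rintro ⟨⟨n1, n2⟩, h1, h2⟩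
  obtain ⟨c1, c2⟩ := c
  obtain ⟨d1, d2⟩ := d
  obtain ⟨f1, f2⟩ := f
  obtain ⟨g1, g2⟩ := g
  dsimp only at *
  subst hc hd hf hg
  set q : ℕ := 5 ^ b with hq
  set X : ℤ := max c1 (max f1 g1) with hX
  have hq25 : 25 ≤ q := by
    calc (25:ℕ) = 5 ^ 2 := by norm_num
    _ ≤ 5 ^ b := Nat.pow_le_pow_right (by norm_num) hb
  have hcX : c1 ≤ X := le_max_left _ _
  have hfX : f1 ≤ X := le_trans (le_max_left _ _) (le_max_right _ _)
  have hgX : g1 ≤ X := le_trans (le_max_right _ _) (le_max_right _ _)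
  have hX2 : 2 ≤ X := by omega
  have mono : ∀ a b' : ℤ, 0 ≤ a → a < b' → a ^ q < b' ^ q := by
    intro a b' ha hab
    exact pow_lt_pow_left₀ hab ha (by omega)
  -- the key quantities
  set w : ℤ := (g1 - c1) * (g1 - f1) + (2 * g1 ^ q - 2 * c1 ^ q) * (2 * g1 ^ q - 2 * f1 ^ q)
    with hwdef
  set D : ℤ := (2 * g1 ^ q - 2 * f1 ^ q) * (c1 - d1) - (g1 - f1) * (2 * c1 ^ q - 2 * d1 ^ q)
    with hDdef
  have key : (n2 - 2 * c1 ^ q) * D = w * (c1 - d1) := by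
    rw [hDdef, hwdef]; linear_combination (c1 - d1) * h1 - (g1 - f1) * h2
  -- w is nonzero (both terms have the same sign)
  have hwne : w ≠ 0 := by
    rcases lt_or_gt_of_ne (Ne.symm hcg) with h | h <;>
      rcases lt_or_gt_of_ne (show g1 ≠ f1 from fun e => hfg e.symm) with h' | h'
    · have m1 := mono g1 c1 (by omega) h
      have m2 := mono g1 f1 (by omega) h'
      have t1 : 0 < (g1 - c1) * (g1 - f1) := mul_pos_of_neg_of_neg (by omega) (by omega)
      have t2 : 0 < (2 * g1 ^ q - 2 * c1 ^ q) * (2 * g1 ^ q - 2 * f1 ^ q) :=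
        mul_pos_of_neg_of_neg (by linarith) (by linarith)
      have : 0 < w := by rw [hwdef]; linarith
      omega
    · have m1 := mono g1 c1 (by omega) h
      have m2 := mono f1 g1 (by omega) h'
      have t1 : (g1 - c1) * (g1 - f1) < 0 := mul_neg_of_neg_of_pos (by omega) (by omega)
      have t2 : (2 * g1 ^ q - 2 * c1 ^ q) * (2 * g1 ^ q - 2 * f1 ^ q) < 0 :=
        mul_neg_of_neg_of_pos (by linarith) (by linarith)
      have : w < 0 := by rw [hwdef]; linarith
      omega
    · have m1 := mono c1 g1 (by omega) h
      have m2 := mono g1 f1 (by omega) h'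
      have t1 : (g1 - c1) * (g1 - f1) < 0 := mul_neg_of_pos_of_neg (by omega) (by omega)
      have t2 : (2 * g1 ^ q - 2 * c1 ^ q) * (2 * g1 ^ q - 2 * f1 ^ q) < 0 :=
        mul_neg_of_pos_of_neg (by linarith) (by linarith)
      have : w < 0 := by rw [hwdef]; linarith
      omega
    · have m1 := mono c1 g1 (by omega) h
      have m2 := mono f1 g1 (by omega) h'
      have t1 : 0 < (g1 - c1) * (g1 - f1) := mul_pos (by omega) (by omega)
      have t2 : 0 < (2 * g1 ^ q - 2 * c1 ^ q) * (2 * g1 ^ q - 2 * f1 ^ q) :=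
        mul_pos (by linarith) (by linarith)
      have : 0 < w := by rw [hwdef]; linarith
      omega
  have hw1 : 1 ≤ |w| := Int.one_le_abs hwne
  set W : ℤ := |w| with hWdef
  have hW0 : 0 ≤ W := abs_nonneg w
  -- Cauchy-Schwarz : W ≤ the big product in hbig
  have hd1 : X ^ 5 * (W + 1) ≤ d1 := by
    set S : ℤ := ((c1 - g1) ^ 2 + (2 * c1 ^ q - 2 * g1 ^ q) ^ 2) *
        ((c1 - f1) ^ 2 + (2 * c1 ^ q - 2 * f1 ^ q) ^ 2) *
        ((g1 - f1) ^ 2 + (2 * g1 ^ q - 2 * f1 ^ q) ^ 2) with hSdef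
    have hWS : W ≤ S := by
      have hAC : w ^ 2 ≤ ((g1 - c1) ^ 2 + (2 * g1 ^ q - 2 * c1 ^ q) ^ 2) *
          ((g1 - f1) ^ 2 + (2 * g1 ^ q - 2 * f1 ^ q) ^ 2) := by
        rw [hwdef]
        exact cs_int (g1 - c1) (2 * g1 ^ q - 2 * c1 ^ q) (g1 - f1) (2 * g1 ^ q - 2 * f1 ^ q)
      have hB : (1:ℤ) ≤ (c1 - f1) ^ 2 + (2 * c1 ^ q - 2 * f1 ^ q) ^ 2 := by
        have h0 : c1 - f1 ≠ 0 := by omega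
        have h1 := Int.one_le_abs h0
        have h2 := mul_le_mul h1 h1 (by norm_num) (abs_nonneg (c1 - f1))
        have h3 : |c1 - f1| * |c1 - f1| = (c1 - f1) ^ 2 := by
          rw [← sq_abs (c1 - f1)]; ring
        linarith [sq_nonneg (2 * c1 ^ q - 2 * f1 ^ q)]
      have hACnn : (0:ℤ) ≤ ((g1 - c1) ^ 2 + (2 * g1 ^ q - 2 * c1 ^ q) ^ 2) *
          ((g1 - f1) ^ 2 + (2 * g1 ^ q - 2 * f1 ^ q) ^ 2) := by positivity
      have hS2 : w ^ 2 ≤ S := by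
        have h := mul_le_mul_of_nonneg_left hB hACnn
        rw [hSdef]
        calc w ^ 2 ≤ ((g1 - c1) ^ 2 + (2 * g1 ^ q - 2 * c1 ^ q) ^ 2) *
              ((g1 - f1) ^ 2 + (2 * g1 ^ q - 2 * f1 ^ q) ^ 2) := hAC
          _ = ((g1 - c1) ^ 2 + (2 * g1 ^ q - 2 * c1 ^ q) ^ 2) *
              ((g1 - f1) ^ 2 + (2 * g1 ^ q - 2 * f1 ^ q) ^ 2) * 1 := by ring
          _ ≤ ((g1 - c1) ^ 2 + (2 * g1 ^ q - 2 * c1 ^ q) ^ 2) *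
              ((g1 - f1) ^ 2 + (2 * g1 ^ q - 2 * f1 ^ q) ^ 2) *
              ((c1 - f1) ^ 2 + (2 * c1 ^ q - 2 * f1 ^ q) ^ 2) := h
          _ = ((c1 - g1) ^ 2 + (2 * c1 ^ q - 2 * g1 ^ q) ^ 2) *
              ((c1 - f1) ^ 2 + (2 * c1 ^ q - 2 * f1 ^ q) ^ 2) *
              ((g1 - f1) ^ 2 + (2 * g1 ^ q - 2 * f1 ^ q) ^ 2) := by ring
      have hWw : W ≤ w ^ 2 := by
        have h := mul_le_mul_of_nonneg_left hw1 hW0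
        have h2 : W * W = w ^ 2 := by rw [← sq_abs]; ring
        linarith
      linarith
    calc X ^ 5 * (W + 1) ≤ X ^ 5 * (S + 1) := by
          apply mul_le_mul_of_nonneg_left (by linarith) (by positivity)
    _ ≤ d1 := hbig
  -- power bounds
  have hXqpos : (1:ℤ) ≤ X ^ q := one_le_pow₀ (by omega)
  have hc1q : c1 ^ q ≤ X ^ q := pow_le_pow_left₀ (by omega) hcX q
  have hg1q : g1 ^ q ≤ X ^ q := pow_le_pow_left₀ (by omega) hgX q
  have hf1q : f1 ^ q ≤ X ^ q := pow_le_pow_left₀ (by omega) hfX q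
  have hc1qpos : (0:ℤ) < c1 ^ q := pow_pos hcpos q
  have hf1qpos : (0:ℤ) < f1 ^ q := pow_pos hfpos q
  have hg1qpos : (0:ℤ) < g1 ^ q := pow_pos hgpos q
  have hcdq : c1 ^ q < d1 ^ q := mono c1 d1 (by omega) hdc
  have hXq5 : 2 * X ^ q ≤ X ^ (5 * (q - 1)) := by
    have he : 5 * (q - 1) = (q + 1) + (4 * q - 6) := by omega
    rw [he, pow_add, pow_succ]
    have h1' : (1:ℤ) ≤ X ^ (4 * q - 6) := one_le_pow₀ (by omega)
    have hXq0 : (0:ℤ) ≤ X ^ q := by linarith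
    have e1 : X ^ q * 2 ≤ X ^ q * X := mul_le_mul_of_nonneg_left hX2 hXq0
    have e2 : X ^ q * X * 1 ≤ X ^ q * X * X ^ (4 * q - 6) :=
      mul_le_mul_of_nonneg_left h1' (mul_nonneg hXq0 (by omega))
    linarith
  have hdq : d1 * (X ^ (5 * (q - 1)) * (W + 1)) ≤ d1 ^ q := by
    have he : q = (q - 1) + 1 := by omega
    have h1' : (X ^ 5 * (W + 1)) ^ (q - 1) ≤ d1 ^ (q - 1) :=
      pow_le_pow_left₀ (by positivity) hd1 _
    have h2' : X ^ (5 * (q - 1)) * (W + 1) ≤ (X ^ 5 * (W + 1)) ^ (q - 1) := by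
      rw [mul_pow, ← pow_mul]
      have : (W + 1) ≤ (W + 1) ^ (q - 1) := le_self_pow₀ (by omega) (by omega)
      have hX5 : (0:ℤ) ≤ X ^ (5 * (q - 1)) := by positivity
      exact mul_le_mul_of_nonneg_left this hX5
    have hpow : d1 ^ q = d1 ^ (q - 1) * d1 := by
      conv_lhs => rw [he]
      exact pow_succ _ _
    calc d1 * (X ^ (5 * (q - 1)) * (W + 1)) ≤ d1 * d1 ^ (q - 1) := by
          apply mul_le_mul_of_nonneg_left (le_trans h2' h1') (by omega)
    _ = d1 ^ q := by rw [hpow]; ring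
  -- main inequality : W * (d1 - c1) < L ≤ |D|
  have hmain : W * (d1 - c1) < 2 * (d1 ^ q - c1 ^ q) - 2 * X ^ q * d1 := by
    have h5 : d1 * (2 * X ^ q * (W + 1)) ≤ d1 * (X ^ (5 * (q - 1)) * (W + 1)) := by
      apply mul_le_mul_of_nonneg_left _ (by omega)
      apply mul_le_mul_of_nonneg_right hXq5 (by omega)
    have h6 : d1 * (2 * X ^ q * (W + 1)) ≤ d1 ^ q := le_trans h5 hdq
    have hWd1nn : (0:ℤ) ≤ W * d1 := mul_nonneg hW0 (by omega)
    have hA : W * d1 * 1 ≤ W * d1 * X ^ q := mul_le_mul_of_nonneg_left hXqpos hWd1nn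
    have hB2 : X ^ q * 1 ≤ X ^ q * d1 := mul_le_mul_of_nonneg_left (by omega) (by linarith)
    have hWc1 : (0:ℤ) ≤ W * c1 := mul_nonneg hW0 (by omega)
    have hWd1 : (1:ℤ) ≤ W * d1 := by
      have := mul_le_mul hw1 (show (1:ℤ) ≤ d1 by omega) (by norm_num) hW0
      linarith
    linarith
  have habsD : 2 * (d1 ^ q - c1 ^ q) - 2 * X ^ q * d1 ≤ |D| := by
    have hub : |(2 * g1 ^ q - 2 * f1 ^ q) * (c1 - d1)| ≤ 2 * X ^ q * d1 := by
      rw [abs_mul]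
      have h1' : |2 * g1 ^ q - 2 * f1 ^ q| ≤ 2 * X ^ q := by
        rw [abs_le]; constructor <;> linarith
      have h2' : |c1 - d1| ≤ d1 := by rw [abs_le]; omega
      exact mul_le_mul h1' h2' (abs_nonneg _) (by positivity)
    have hlb : 2 * (d1 ^ q - c1 ^ q) ≤ |(g1 - f1) * (2 * c1 ^ q - 2 * d1 ^ q)| := by
      rw [abs_mul]
      have h1' : (1:ℤ) ≤ |g1 - f1| := by
        exact Int.one_le_abs (by omega)
      have h2' : |2 * c1 ^ q - 2 * d1 ^ q| = 2 * (d1 ^ q - c1 ^ q) := by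
        rw [abs_of_nonpos (by linarith)]; ring
      rw [h2']
      have := mul_le_mul_of_nonneg_right h1' (show (0:ℤ) ≤ 2 * (d1 ^ q - c1 ^ q) by linarith)
      linarith
    calc 2 * (d1 ^ q - c1 ^ q) - 2 * X ^ q * d1
        ≤ |(g1 - f1) * (2 * c1 ^ q - 2 * d1 ^ q)| - |(2 * g1 ^ q - 2 * f1 ^ q) * (c1 - d1)| := by
          linarith
    _ ≤ |(g1 - f1) * (2 * c1 ^ q - 2 * d1 ^ q) - (2 * g1 ^ q - 2 * f1 ^ q) * (c1 - d1)| :=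
          abs_sub_abs_le_abs_sub _ _
    _ = |D| := by rw [hDdef, abs_sub_comm]
  -- conclude
  have hn2 : n2 - 2 * c1 ^ q ≠ 0 := by
    intro h0
    rw [h0, zero_mul] at key
    exact absurd key.symm (mul_ne_zero hwne (by omega))
  have h1n : 1 ≤ |n2 - 2 * c1 ^ q| := Int.one_le_abs hn2
  have hDabs : |D| ≤ |n2 - 2 * c1 ^ q| * |D| := by
    have := mul_le_mul_of_nonneg_right h1n (abs_nonneg D)
    linarith
  have heq : |n2 - 2 * c1 ^ q| * |D| = W * (d1 - c1) := by
    rw [← abs_mul, key, abs_mul, hWdef, abs_of_nonpos (show c1 - d1 ≤ 0 by omega)]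
    ring
  linarith [hmain, habsD, hDabs, heq]
end

section
/- Let d ∈ ℤ² and c ∈ ℤ² with c₂ > 0 and d₂ sufficiently large compared to |c₁|, |c₂|, |d₁| (d₂ ≫ |c₁|, |c₂|, |d₁|). Then the quadratic equation (d₁² + d₂²) n₁² + (d₁ d₂ c₂ - c₁ d₂²) n₁ + c₁ d₁ d₂² + c₂ d₂³ = 0 has negative discriminant, and hence no real (a fortiori no integer) solution n₁. -/
/-- Case III-iii-(2) of the appendix: with `c₂ > 0` and `d₂` sufficiently large
compared to `|c₁|, |c₂|, |d₁|`, the quadratic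
`(d₁² + d₂²) n₁² + (d₁d₂c₂ - c₁d₂²) n₁ + c₁d₁d₂² + c₂d₂³ = 0`
has negative discriminant `Δ = (d₁d₂c₂ - c₁d₂²)² - 4(d₁² + d₂²)(c₁d₁d₂² + c₂d₂³)`,
and hence no integer solution `n₁`. -/
theorem stmt17 (c₁ c₂ d₁ d₂ : ℤ) (hc₂ : 0 < c₂)
    (hbig : (|c₁| + |c₂| + |d₁| + 1) ^ 4 + 8 * (|c₁| + |c₂| + |d₁|) ^ 2 < d₂) :
    (d₁ * d₂ * c₂ - c₁ * d₂ ^ 2) ^ 2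
        - 4 * (d₁ ^ 2 + d₂ ^ 2) * (c₁ * d₁ * d₂ ^ 2 + c₂ * d₂ ^ 3) < 0 ∧
    ¬ ∃ n₁ : ℤ, (d₁ ^ 2 + d₂ ^ 2) * n₁ ^ 2 + (d₁ * d₂ * c₂ - c₁ * d₂ ^ 2) * n₁
        + c₁ * d₁ * d₂ ^ 2 + c₂ * d₂ ^ 3 = 0 := by
  set M : ℤ := |c₁| + |c₂| + |d₁| with hM
  have h1 : |c₁| ≤ M := by
    have := abs_nonneg c₂; have := abs_nonneg d₁; omega
  have h2 : |c₂| ≤ M := by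
    have := abs_nonneg c₁; have := abs_nonneg d₁; omega
  have h3 : |d₁| ≤ M := by
    have := abs_nonneg c₁; have := abs_nonneg c₂; omega
  have hMnn : 0 ≤ M := by
    have := abs_nonneg c₁; have := abs_nonneg c₂; have := abs_nonneg d₁; omega
  have hd2big : 2 * M ^ 2 < d₂ := by nlinarith [sq_nonneg (M + 1), sq_nonneg M]
  have hMd2 : M ≤ d₂ := by nlinarith [sq_nonneg (M + 1), sq_nonneg M, sq_nonneg (M^2 + M)]
  have hd2pos : 0 < d₂ := by nlinarith
  -- bound on |d₁ c₂ - c₁ d₂|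
  have habs : |d₁ * c₂ - c₁ * d₂| ≤ 2 * M * d₂ := by
    calc |d₁ * c₂ - c₁ * d₂| ≤ |d₁ * c₂| + |c₁ * d₂| := abs_sub _ _
      _ = |d₁| * |c₂| + |c₁| * |d₂| := by rw [abs_mul, abs_mul]
      _ ≤ M * M + M * d₂ := by
          rw [abs_of_pos hd2pos]
          have := abs_nonneg c₁; have := abs_nonneg c₂; have := abs_nonneg d₁
          nlinarith
      _ ≤ 2 * M * d₂ := by nlinarith
  have hA : (d₁ * c₂ - c₁ * d₂) ^ 2 ≤ 4 * M ^ 2 * d₂ ^ 2 := by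
    have h0 : (0:ℤ) ≤ 2 * M * d₂ := by positivity
    calc (d₁ * c₂ - c₁ * d₂) ^ 2 = |d₁ * c₂ - c₁ * d₂| ^ 2 := (sq_abs _).symm
      _ ≤ (2 * M * d₂) ^ 2 := pow_le_pow_left₀ (abs_nonneg _) habs 2
      _ = 4 * M ^ 2 * d₂ ^ 2 := by ring
  have hcd : d₂ - M ^ 2 ≤ c₁ * d₁ + c₂ * d₂ := by
    have h4 : -(M ^ 2) ≤ c₁ * d₁ := by
      have := neg_abs_le (c₁ * d₁)
      have := abs_mul c₁ d₁
      nlinarith [abs_nonneg c₁, abs_nonneg d₁]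
    have h5 : d₂ ≤ c₂ * d₂ := by nlinarith
    linarith
  have hB : 4 * M ^ 2 * d₂ ^ 2 < 4 * (d₁ ^ 2 + d₂ ^ 2) * (c₁ * d₁ + c₂ * d₂) := by
    have hpos : 0 < c₁ * d₁ + c₂ * d₂ := by nlinarith
    have : 4 * d₂ ^ 2 * (d₂ - M ^ 2) ≤ 4 * (d₁ ^ 2 + d₂ ^ 2) * (c₁ * d₁ + c₂ * d₂) := by
      nlinarith [sq_nonneg d₁, sq_nonneg d₂]
    nlinarith [sq_nonneg d₂]
  have hE : (d₁ * c₂ - c₁ * d₂) ^ 2 - 4 * (d₁ ^ 2 + d₂ ^ 2) * (c₁ * d₁ + c₂ * d₂) < 0 := by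
    linarith
  have hΔ : (d₁ * d₂ * c₂ - c₁ * d₂ ^ 2) ^ 2
      - 4 * (d₁ ^ 2 + d₂ ^ 2) * (c₁ * d₁ * d₂ ^ 2 + c₂ * d₂ ^ 3) < 0 := by
    have key : (d₁ * d₂ * c₂ - c₁ * d₂ ^ 2) ^ 2
        - 4 * (d₁ ^ 2 + d₂ ^ 2) * (c₁ * d₁ * d₂ ^ 2 + c₂ * d₂ ^ 3)
        = d₂ ^ 2 * ((d₁ * c₂ - c₁ * d₂) ^ 2
            - 4 * (d₁ ^ 2 + d₂ ^ 2) * (c₁ * d₁ + c₂ * d₂)) := by ring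
    rw [key]
    have : (0:ℤ) < d₂ ^ 2 := by positivity
    exact mul_neg_of_pos_of_neg this hE
  refine ⟨hΔ, ?_⟩
  rintro ⟨n, hn⟩
  have h2 : (2 * (d₁ ^ 2 + d₂ ^ 2) * n + (d₁ * d₂ * c₂ - c₁ * d₂ ^ 2)) ^ 2
      = (d₁ * d₂ * c₂ - c₁ * d₂ ^ 2) ^ 2
        - 4 * (d₁ ^ 2 + d₂ ^ 2) * (c₁ * d₁ * d₂ ^ 2 + c₂ * d₂ ^ 3) := by
    linear_combination 4 * (d₁ ^ 2 + d₂ ^ 2) * hn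
  nlinarith [sq_nonneg (2 * (d₁ ^ 2 + d₂ ^ 2) * n + (d₁ * d₂ * c₂ - c₁ * d₂ ^ 2))]
end
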